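/- Let (A,·) be a finite-dimensional (nonunital) associative algebra over a field F and let r ∈ A⊗A be antisymmetric and nondegenerate, i.e. the induced linear map r : A* → A, ⟨u*, r(v*)⟩ = ⟨u*⊗v*, r⟩, is bijective. Then r satisfies the associative Yang–Baxter equation r₁₂r₁₃ + r₁₃r₂₃ − r₂₃r₁₂ = 0 if and only if the bilinear form ω on A defined by ω(x,y) = ⟨r⁻¹(x), y⟩ is a Connes cocycle, i.e. ω is antisymmetric and ω(x·y, z) + ω(y·z, x) + ω(z·x, y) = 0 for all x,y,z ∈ A. -/

import Mathlib

open TensorProduct LinearMap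

section Prelude
variable {F : Type*} [Field F]

/-- Associativity of a (nonunital) bilinear product. -/
def IsAssocMul {A : Type*} [AddCommGroup A] [Module F A]
    (m : A →ₗ[F] A →ₗ[F] A) : Prop :=
  ∀ x y z, m (m x y) z = m x (m y z)

/-- `(l, r, V)` is a bimodule of the associative algebra `(A, m)`. -/
def IsBimodule {A V : Type*} [AddCommGroup A] [Module F A]
    [AddCommGroup V] [Module F V]
    (m : A →ₗ[F] A →ₗ[F] A) (l r : A →ₗ[F] V →ₗ[F] V) : Prop :=
  (∀ x y v, l (m x y) v = l x (l y v)) ∧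
  (∀ x y v, r (m x y) v = r y (r x v)) ∧
  (∀ x y v, l x (r y v) = r y (l x v))

/-- `(A, B, lA, rA, lB, rB)` is a matched pair of associative algebras. -/
def IsMatchedPair {A B : Type*} [AddCommGroup A] [Module F A]
    [AddCommGroup B] [Module F B]
    (mA : A →ₗ[F] A →ₗ[F] A) (mB : B →ₗ[F] B →ₗ[F] B)
    (lA rA : A →ₗ[F] B →ₗ[F] B) (lB rB : B →ₗ[F] A →ₗ[F] A) : Prop :=
  IsAssocMul mA ∧ IsAssocMul mB ∧ IsBimodule mA lA rA ∧ IsBimodule mB lB rB ∧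
  (∀ x a b, lA x (mB a b) = lA (rB a x) b + mB (lA x a) b) ∧
  (∀ x a b, rA x (mB a b) = rA (lB b x) a + mB a (rA x b)) ∧
  (∀ a x y, lB a (mA x y) = lB (rA x a) y + mA (lB a x) y) ∧
  (∀ a x y, rB a (mA x y) = rB (lA y a) x + mA x (rB a y)) ∧
  (∀ x a b, lA (lB a x) b + mB (rA x a) b - rA (rB b x) a - mB a (lA x b) = 0) ∧
  (∀ a x y, lB (lA x a) y + mA (rB a x) y - rB (rA y a) x - mA x (lB a y) = 0)

/-- Dendriform algebra axioms for a pair of bilinear products `≻ = s`, `≺ = p`. -/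
def IsDendriform {A : Type*} [AddCommGroup A] [Module F A]
    (s p : A →ₗ[F] A →ₗ[F] A) : Prop :=
  (∀ x y z, p (p x y) z = p x (s y z + p y z)) ∧
  (∀ x y z, p (s x y) z = s x (p y z)) ∧
  (∀ x y z, s x (s y z) = s (s x y + p x y) z)

/-- The pairing of `f ⊗ g ∈ A* ⊗ A*` with elements of `A ⊗ A`. -/
noncomputable def pair2 {A : Type*} [AddCommGroup A] [Module F A]
    (f g : Module.Dual F A) : (A ⊗[F] A) →ₗ[F] F :=
  (TensorProduct.lid F F).toLinearMap ∘ₗ TensorProduct.map f g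

/-- `t12 m (r ⊗ s)` is `r₁₂ ∙ s₁₃`: on `(x ⊗ y) ⊗ (x' ⊗ y')` it gives `m x x' ⊗ y ⊗ y'`. -/
noncomputable def t12 {A : Type*} [AddCommGroup A] [Module F A]
    (m : A →ₗ[F] A →ₗ[F] A) :
    ((A ⊗[F] A) ⊗[F] (A ⊗[F] A)) →ₗ[F] A ⊗[F] (A ⊗[F] A) :=
  TensorProduct.map (TensorProduct.lift m) LinearMap.id ∘ₗ
    (TensorProduct.tensorTensorTensorComm F A A A A).toLinearMap

/-- `t13 m (r ⊗ s)` is `r₁₃ ∙ s₂₃`: on `(x ⊗ y) ⊗ (x' ⊗ y')` it gives `x ⊗ x' ⊗ m y y'`. -/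
noncomputable def t13 {A : Type*} [AddCommGroup A] [Module F A]
    (m : A →ₗ[F] A →ₗ[F] A) :
    ((A ⊗[F] A) ⊗[F] (A ⊗[F] A)) →ₗ[F] A ⊗[F] (A ⊗[F] A) :=
  (TensorProduct.assoc F A A A).toLinearMap ∘ₗ
    TensorProduct.map LinearMap.id (TensorProduct.lift m) ∘ₗ
    (TensorProduct.tensorTensorTensorComm F A A A A).toLinearMap

/-- `t23 m (r ⊗ s)` is `r₂₃ ∙ s₁₂`: on `(x ⊗ y) ⊗ (x' ⊗ y')` it gives `x' ⊗ m x y' ⊗ y`. -/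
noncomputable def t23 {A : Type*} [AddCommGroup A] [Module F A]
    (m : A →ₗ[F] A →ₗ[F] A) :
    ((A ⊗[F] A) ⊗[F] (A ⊗[F] A)) →ₗ[F] A ⊗[F] (A ⊗[F] A) :=
  (TensorProduct.leftComm F A A A).toLinearMap ∘ₗ
    TensorProduct.map LinearMap.id (TensorProduct.comm F A A).toLinearMap ∘ₗ
    TensorProduct.map (TensorProduct.lift m) LinearMap.id ∘ₗ
    (TensorProduct.tensorTensorTensorComm F A A A A).toLinearMap ∘ₗ
    TensorProduct.map LinearMap.id (TensorProduct.comm F A A).toLinearMap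

/-- `aybE m r = r₁₂r₁₃ + r₁₃r₂₃ − r₂₃r₁₂`, the associative Yang–Baxter expression. -/
noncomputable def aybE {A : Type*} [AddCommGroup A] [Module F A]
    (m : A →ₗ[F] A →ₗ[F] A) (r : A ⊗[F] A) : A ⊗[F] (A ⊗[F] A) :=
  t12 m (r ⊗ₜ r) + t13 m (r ⊗ₜ r) - t23 m (r ⊗ₜ r)

end Prelude

/-!
Pair `r₁₂r₁₃ + r₁₃r₂₃ − r₂₃r₁₂` with `u ⊗ v ⊗ w` and write `r(v)` for the contraction of `r`
with `v` in the second slot. Since the contractions in the first slot are `−r(·)` by antisymmetry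
of `r`, the pairing is `⟨u, r(v)·r(w)⟩ + ⟨w, r(u)·r(v)⟩ + ⟨v, r(w)·r(u)⟩`. As
such pairings separate `A ⊗ A ⊗ A`, the AYBE says this cyclic sum vanishes for all `u, v, w`;
putting `u = r⁻¹x, v = r⁻¹y, w = r⁻¹z` it reads `ω(x, yz) + ω(z, xy) + ω(y, zx) = 0`, which is the
Connes identity once `ω` is antisymmetric, and `ω` inherits antisymmetry from `r`.
-/

namespace TensorProduct

variable {R M N : Type*} [CommSemiring R] [AddCommMonoid M] [AddCommMonoid N]
  [Module R M] [Module R N] [Module.Finite R M] [Module.Finite R N]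
  [Module.Free R M] [Module.Free R N]

theorem eq_zero_of_forall_dualDistrib_tmul_apply_eq_zero {t : M ⊗[R] N}
    (h : ∀ f g, dualDistrib R M N (f ⊗ₜ g) t = 0) : t = 0 := by
  refine (Module.forall_dual_apply_eq_zero_iff R t).mp fun φ => ?_
  obtain ⟨x, rfl⟩ := (dualDistribEquiv R M N).surjective φ
  induction x using TensorProduct.induction_on with
  | zero => simp
  | tmul f g => exact h f g
  | add x y hx hy => simp_all

end TensorProduct

section Contraction

variable {F A : Type*} [Field F] [AddCommGroup A] [Module F A]

noncomputable def pair3 (u v w : Module.Dual F A) : Module.Dual F (A ⊗[F] (A ⊗[F] A)) :=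
  dualDistrib F A (A ⊗[F] A) (u ⊗ₜ pair2 v w)

@[simp] lemma pair2_tmul (f g : Module.Dual F A) (x y : A) :
    pair2 f g (x ⊗ₜ y) = f x * g y := rfl

@[simp] lemma pair3_tmul (u v w : Module.Dual F A) (x y z : A) :
    pair3 u v w (x ⊗ₜ (y ⊗ₜ z)) = u x * (v y * w z) := rfl

theorem eq_zero_of_forall_pair3_apply_eq_zero [FiniteDimensional F A] {T : A ⊗[F] (A ⊗[F] A)}
    (h : ∀ u v w, pair3 u v w T = 0) : T = 0 := by
  refine eq_zero_of_forall_dualDistrib_tmul_apply_eq_zero fun u ψ => ?_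
  obtain ⟨x, rfl⟩ := (dualDistribEquiv F A A).surjective ψ
  induction x using TensorProduct.induction_on with
  | zero => simp
  | tmul v w => exact h u v w
  | add x y hx hy => simp_all [tmul_add]

noncomputable def rightContract (v : Module.Dual F A) : A ⊗[F] A →ₗ[F] A :=
  (TensorProduct.rid F A).toLinearMap ∘ₗ lTensor A v

noncomputable def leftContract (u : Module.Dual F A) : A ⊗[F] A →ₗ[F] A :=
  (TensorProduct.lid F A).toLinearMap ∘ₗ rTensor A u

@[simp] lemma rightContract_tmul (v : Module.Dual F A) (x y : A) :
    rightContract v (x ⊗ₜ y) = v y • x := rfl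

@[simp] lemma leftContract_tmul (u : Module.Dual F A) (x y : A) :
    leftContract u (x ⊗ₜ y) = u x • y := rfl

lemma apply_rightContract (u v : Module.Dual F A) (t : A ⊗[F] A) :
    u (rightContract v t) = pair2 u v t := by
  induction t using TensorProduct.induction_on <;> simp_all [mul_comm]

lemma apply_leftContract (u v : Module.Dual F A) (t : A ⊗[F] A) :
    v (leftContract u t) = pair2 u v t := by
  induction t using TensorProduct.induction_on <;> simp_all

lemma leftContract_eq_rightContract_comm (u : Module.Dual F A) (t : A ⊗[F] A) :
    leftContract u t = rightContract u (TensorProduct.comm F A A t) := by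
  induction t using TensorProduct.induction_on <;> simp_all

lemma leftContract_eq_neg_rightContract {r : A ⊗[F] A} (hr : TensorProduct.comm F A A r = -r)
    (u : Module.Dual F A) : leftContract u r = -rightContract u r := by
  rw [leftContract_eq_rightContract_comm, hr, map_neg]

end Contraction

section AYBE

variable {F A : Type*} [Field F] [AddCommGroup A] [Module F A] (m : A →ₗ[F] A →ₗ[F] A)

section Pairing

variable (u v w : Module.Dual F A) (r s : A ⊗[F] A)

lemma pair3_t12_tmul :
    pair3 u v w (t12 m (r ⊗ₜ s)) = u (m (rightContract v r) (rightContract w s)) := by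
  have h : pair3 u v w ∘ₗ t12 m = u ∘ₗ lift m ∘ₗ map (rightContract v) (rightContract w) := by
    ext; simp [t12, mul_comm, mul_left_comm, mul_assoc]
  simpa using LinearMap.congr_fun h (r ⊗ₜ s)

lemma pair3_t13_tmul :
    pair3 u v w (t13 m (r ⊗ₜ s)) = w (m (leftContract u r) (leftContract v s)) := by
  have h : pair3 u v w ∘ₗ t13 m = w ∘ₗ lift m ∘ₗ map (leftContract u) (leftContract v) := by
    ext; simp [t13, mul_left_comm]
  simpa using LinearMap.congr_fun h (r ⊗ₜ s)

lemma pair3_t23_tmul :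
    pair3 u v w (t23 m (r ⊗ₜ s)) = v (m (rightContract w r) (leftContract u s)) := by
  have h : pair3 u v w ∘ₗ t23 m = v ∘ₗ lift m ∘ₗ map (rightContract w) (leftContract u) := by
    ext; simp [t23, mul_comm]
  simpa using LinearMap.congr_fun h (r ⊗ₜ s)

lemma pair3_aybE :
    pair3 u v w (aybE m r) =
      u (m (rightContract v r) (rightContract w r)) + w (m (leftContract u r) (leftContract v r)) -
        v (m (rightContract w r) (leftContract u r)) := by
  simp only [aybE, map_add, map_sub, pair3_t12_tmul, pair3_t13_tmul, pair3_t23_tmul]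

end Pairing

theorem aybE_eq_zero_iff_of_comm_eq_neg [FiniteDimensional F A] {r : A ⊗[F] A}
    (hr : TensorProduct.comm F A A r = -r) :
    aybE m r = 0 ↔ ∀ u v w : Module.Dual F A,
      u (m (rightContract v r) (rightContract w r)) + w (m (rightContract u r) (rightContract v r)) +
        v (m (rightContract w r) (rightContract u r)) = 0 := by
  have pair3_aybE_eq : ∀ u v w : Module.Dual F A, pair3 u v w (aybE m r) =
      u (m (rightContract v r) (rightContract w r)) + w (m (rightContract u r) (rightContract v r)) +
        v (m (rightContract w r) (rightContract u r)) := fun u v w => by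
    simp [pair3_aybE, leftContract_eq_neg_rightContract hr]
  simp_rw [← pair3_aybE_eq]
  exact ⟨fun h u v w => by simp [h], eq_zero_of_forall_pair3_apply_eq_zero⟩

end AYBE

theorem ayb_iff_connes_cocycle_general
    {F A : Type*} [Field F] [AddCommGroup A] [Module F A] [FiniteDimensional F A]
    (mA : A →ₗ[F] A →ₗ[F] A)
    (r : A ⊗[F] A)
    (hskew : (TensorProduct.comm F A A) r = -r)
    -- nondegeneracy: `r` induces a linear isomorphism `A* ≃ A`
    (e : Module.Dual F A ≃ₗ[F] A)
    (he : ∀ u v : Module.Dual F A, u (e v) = pair2 u v r) :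
    aybE mA r = 0 ↔
      ((∀ x y : A, e.symm x y = - e.symm y x) ∧
       (∀ x y z : A,
          e.symm (mA x y) z + e.symm (mA y z) x + e.symm (mA z x) y = 0)) := by
  have hre : ∀ v, rightContract v r = e v := fun v => by
    rw [← sub_eq_zero, ← Module.forall_dual_apply_eq_zero_iff F]
    simp [apply_rightContract, he]
  have hω : ∀ x y : A, e.symm x y = - e.symm y x := fun x y =>
    calc e.symm x y = e.symm x (rightContract (e.symm y) r) := by simp [hre]
      _ = e.symm y (leftContract (e.symm x) r) := by rw [apply_rightContract, apply_leftContract]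
      _ = - e.symm y x := by simp [leftContract_eq_neg_rightContract hskew, hre]
  rw [aybE_eq_zero_iff_of_comm_eq_neg mA hskew, and_iff_right hω, e.symm.surjective.forall₃]
  simp only [hre, LinearEquiv.apply_symm_apply]
  refine forall₃_congr fun x y z => ?_
  rw [hω (mA x y), hω (mA y z), hω (mA z x)]
  constructor <;> intro h <;> linear_combination -h

/-- a nondegenerate antisymmetric `r` solves the associative
Yang–Baxter equation iff the bilinear form `ω(x,y) = ⟨r⁻¹(x), y⟩` is a Connes
cocycle. -/
theorem ayb_iff_connes_cocycle
    {F A : Type*} [Field F] [AddCommGroup A] [Module F A] [FiniteDimensional F A]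
    (mA : A →ₗ[F] A →ₗ[F] A) (hA : IsAssocMul mA)
    (r : A ⊗[F] A)
    (hskew : (TensorProduct.comm F A A) r = -r)
    -- nondegeneracy: `r` induces a linear isomorphism `A* ≃ A`
    (e : Module.Dual F A ≃ₗ[F] A)
    (he : ∀ u v : Module.Dual F A, u (e v) = pair2 u v r) :
    aybE mA r = 0 ↔
      ((∀ x y : A, e.symm x y = - e.symm y x) ∧
       (∀ x y z : A,
          e.symm (mA x y) z + e.symm (mA y z) x + e.symm (mA z x) y = 0)) :=
  ayb_iff_connes_cocycle_general mA r hskew e he
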